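/- arXiv:2011.02611 — 3 statements merged into one kernel-verified Lean document; each statement's English description precedes it below -/
import Mathlib

section
/- For all integers k ≥ 1 and all integers r with 0 < r < kβ/2 (β a positive integer), the expression 2·((k+2)/k)·r² − r + ⌊(k+1)·2r/k⌋·(⌊(k+1)·2r/k⌋+1)/2 − ⌊2r/k⌋·(⌊2r/k⌋+1)/2 − (k+1)·(2r/k)·⌊(k+1)·2r/k⌋ + (2r/k)·⌊2r/k⌋ equals 0. -/
/-- Single theta quotient slow-growth identity: for integers `k ≥ 1`, `β > 0`, and
`0 < r < kβ/2`, the exponent expression vanishes. -/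
theorem stmt_0 (k β r : ℤ) (hk : 1 ≤ k) (hβ : 0 < β)
    (hr : 0 < r) (hr2 : 2 * r < k * β) :
    2 * (((k : ℚ) + 2) / k) * (r : ℚ) ^ 2 - (r : ℚ)
      + ((⌊((k : ℚ) + 1) * (2 * r) / k⌋ : ℚ) * ((⌊((k : ℚ) + 1) * (2 * r) / k⌋ : ℚ) + 1)) / 2
      - ((⌊(2 * (r : ℚ)) / k⌋ : ℚ) * ((⌊(2 * (r : ℚ)) / k⌋ : ℚ) + 1)) / 2
      - ((k : ℚ) + 1) * (2 * (r : ℚ) / k) * (⌊((k : ℚ) + 1) * (2 * r) / k⌋ : ℚ)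
      + (2 * (r : ℚ) / k) * (⌊(2 * (r : ℚ)) / k⌋ : ℚ) = 0 := by
  have hk0 : (k : ℚ) ≠ 0 := by
    exact_mod_cast (show k ≠ 0 by omega)
  have h1 : ((k : ℚ) + 1) * (2 * r) / k = ((2 * r : ℤ) : ℚ) + 2 * (r : ℚ) / k := by
    push_cast
    field_simp
  rw [h1, Int.floor_intCast_add]
  push_cast
  field_simp
  ring
end

section
/- For every integer k ≥ 1 and every integer r with 1 ≤ r ≤ k−1, the expression ((k+1)²−1)/2·(r/k)² − (k/2)·(r/k) + ((k+2)²−4)/2·(r/k)² − (k/2)·(r/k) + ⌊(k+1)r/k⌋(⌊(k+1)r/k⌋+1)/2 − ⌊r/k⌋(⌊r/k⌋+1)/2 − (k+1)(r/k)⌊(k+1)r/k⌋ + (r/k)⌊r/k⌋ + ⌊(k+2)r/k⌋(⌊(k+2)r/k⌋+1)/2 − ⌊2r/k⌋(⌊2r/k⌋+1)/2 − (k+2)(r/k)⌊(k+2)r/k⌋ + 2(r/k)⌊2r/k⌋ equals 0. -/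
/-- Kazama–Suzuki slow-growth identity: the exponent expression for `φ^{2,k}` vanishes
for all `1 ≤ r ≤ k - 1`. -/
theorem stmt_2 (k r : ℤ) (hk : 1 ≤ k) (hr1 : 1 ≤ r) (hr2 : r ≤ k - 1) :
    ((((k : ℚ) + 1) ^ 2 - 1) / 2) * ((r : ℚ) / k) ^ 2 - ((k : ℚ) / 2) * ((r : ℚ) / k)
      + ((((k : ℚ) + 2) ^ 2 - 4) / 2) * ((r : ℚ) / k) ^ 2 - ((k : ℚ) / 2) * ((r : ℚ) / k)
      + ((⌊((k : ℚ) + 1) * r / k⌋ : ℚ) * ((⌊((k : ℚ) + 1) * r / k⌋ : ℚ) + 1)) / 2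
      - ((⌊(r : ℚ) / k⌋ : ℚ) * ((⌊(r : ℚ) / k⌋ : ℚ) + 1)) / 2
      - ((k : ℚ) + 1) * ((r : ℚ) / k) * (⌊((k : ℚ) + 1) * r / k⌋ : ℚ)
      + ((r : ℚ) / k) * (⌊(r : ℚ) / k⌋ : ℚ)
      + ((⌊((k : ℚ) + 2) * r / k⌋ : ℚ) * ((⌊((k : ℚ) + 2) * r / k⌋ : ℚ) + 1)) / 2
      - ((⌊2 * (r : ℚ) / k⌋ : ℚ) * ((⌊2 * (r : ℚ) / k⌋ : ℚ) + 1)) / 2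
      - ((k : ℚ) + 2) * ((r : ℚ) / k) * (⌊((k : ℚ) + 2) * r / k⌋ : ℚ)
      + 2 * ((r : ℚ) / k) * (⌊2 * (r : ℚ) / k⌋ : ℚ) = 0 := by
  have hk0 : (0:ℚ) < k := by exact_mod_cast lt_of_lt_of_le zero_lt_one hk
  have hkne : (k:ℚ) ≠ 0 := ne_of_gt hk0
  have hr0 : (0:ℚ) < r := by exact_mod_cast lt_of_lt_of_le zero_lt_one hr1
  have hrk : (r:ℚ) < k := by
    have : r < k := by omega
    exact_mod_cast this
  have h1 : ⌊(r:ℚ)/k⌋ = 0 := by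
    rw [Int.floor_eq_zero_iff]
    constructor
    · positivity
    · rw [div_lt_one hk0]; exact hrk
  have e2 : ((k:ℚ)+1)*r/k = (r:ℚ)/k + (r:ℤ) := by push_cast; field_simp; ring
  have h2 : ⌊((k:ℚ)+1)*r/k⌋ = r := by
    rw [e2, Int.floor_add_intCast, h1, zero_add]
  have e3 : ((k:ℚ)+2)*r/k = 2*(r:ℚ)/k + (r:ℤ) := by push_cast; field_simp; ring
  have h3 : ⌊((k:ℚ)+2)*r/k⌋ = r + ⌊2*(r:ℚ)/k⌋ := by
    rw [e3, Int.floor_add_intCast]; ring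
  rcases le_or_gt k (2*r) with h | h
  · have h4 : ⌊2*(r:ℚ)/k⌋ = 1 := by
      rw [Int.floor_eq_iff]
      push_cast
      constructor
      · rw [le_div_iff₀ hk0]; push_cast; rw [one_mul]; exact_mod_cast h
      · rw [div_lt_iff₀ hk0]
        have h5 : 2*r < 2*k := by omega
        push_cast
        have : ((2*r:ℤ):ℚ) < ((2*k:ℤ):ℚ) := by exact_mod_cast h5
        push_cast at this
        linarith
    rw [h1, h2, h3, h4]
    push_cast
    field_simp
    ring
  · have h4 : ⌊2*(r:ℚ)/k⌋ = 0 := by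
      rw [Int.floor_eq_zero_iff]
      constructor
      · positivity
      · rw [div_lt_one hk0]
        exact_mod_cast h
    rw [h1, h2, h3, h4]
    push_cast
    field_simp
    ring
end

section
/- For integers α, β, r, b with b = (α − β)/2 > 0, β | α, α = (k+1)β, and 1 ≤ r ≤ b − 1 where b = kβ/2, the exponent (α² − β²)/2 · (r/b)² − (α − β)/2 · (r/b) + ⌊αr/b⌋(⌊αr/b⌋+1)/2 − ⌊βr/b⌋(⌊βr/b⌋+1)/2 − (αr/b)⌊αr/b⌋ + (βr/b)⌊βr/b⌋ is equal to 0. -/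
/-- Slow-growth condition for single theta quotients `θ₁(τ,αz)/θ₁(τ,βz)` with
`α = (k+1)β` and `b = kβ/2`: the exponent expression vanishes for `1 ≤ r ≤ b−1`. -/
theorem stmt_10 (α β k b r : ℤ) (hβ : 0 < β) (hk : 1 ≤ k)
    (hα : α = (k + 1) * β) (hdvd : β ∣ α)
    (hb : 2 * b = α - β) (hbpos : 0 < b)
    (hr1 : 1 ≤ r) (hr2 : r ≤ b - 1) :
    (((α : ℚ) ^ 2 - (β : ℚ) ^ 2) / 2) * ((r : ℚ) / b) ^ 2
      - (((α : ℚ) - (β : ℚ)) / 2) * ((r : ℚ) / b)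
      + ((⌊(α : ℚ) * r / b⌋ : ℚ) * ((⌊(α : ℚ) * r / b⌋ : ℚ) + 1)) / 2
      - ((⌊(β : ℚ) * r / b⌋ : ℚ) * ((⌊(β : ℚ) * r / b⌋ : ℚ) + 1)) / 2
      - ((α : ℚ) * r / b) * (⌊(α : ℚ) * r / b⌋ : ℚ)
      + ((β : ℚ) * r / b) * (⌊(β : ℚ) * r / b⌋ : ℚ) = 0 := by
  have hb0 : (b : ℚ) ≠ 0 := by exact_mod_cast hbpos.ne'
  have hαq : (α : ℚ) = (β : ℚ) + 2 * b := by
    exact_mod_cast (by linarith : α = β + 2 * b)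
  have h1 : (α : ℚ) * r / b = (β : ℚ) * r / b + ((2 * r : ℤ) : ℚ) := by
    rw [hαq]; push_cast; field_simp
  have h2 : ⌊(α : ℚ) * r / b⌋ = ⌊(β : ℚ) * r / b⌋ + 2 * r := by
    rw [h1, Int.floor_add_intCast]
  rw [h2, h1, hαq]
  push_cast
  field_simp
  ring
end
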